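/- arXiv:1207.4436 — 3 statements merged into one kernel-verified Lean document; each statement's English description precedes it below -/
import Mathlib

section
/- Let A be an M×M real (or complex) matrix with eᵀA = 0 such that 0 is an algebraically simple eigenvalue of A (i.e. 0 is a root of multiplicity exactly one of the characteristic polynomial of A) and every nonzero complex eigenvalue of A has strictly negative real part. Then the reduced matrix Ã = J A H is a stable matrix: every complex eigenvalue of Ã has strictly negative real part. -/
open Matrix Polynomial

/-- The all-but-last-row identity matrix `J` (size `(M-1) × M`). -/
noncomputable def J (M : ℕ) : Matrix (Fin (M - 1)) (Fin M) ℝ :=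
  Matrix.of fun i j => if (i : ℕ) = (j : ℕ) then 1 else 0

/-- The matrix `H` (size `M × (M-1)`): identity on top, last row all `-1`. -/
noncomputable def H (M : ℕ) : Matrix (Fin M) (Fin (M - 1)) ℝ :=
  Matrix.of fun i j => if (i : ℕ) = (j : ℕ) then 1 else if (i : ℕ) = M - 1 then -1 else 0

/-- The all-ones vector `e = (1,...,1)ᵀ`. -/
noncomputable def eVec (M : ℕ) : Fin M → ℝ := fun _ => 1

lemma myEvalCharpoly {m : Type*} [Fintype m] [DecidableEq m] {R : Type*} [CommRing R]
    (N : Matrix m m R) (r : R) :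
    N.charpoly.eval r = (r • (1 : Matrix m m R) - N).det := by
  rw [Matrix.charpoly, ← Polynomial.coe_evalRingHom, RingHom.map_det]
  congr 1
  ext i j
  by_cases h : i = j
  · subst h
    simp [Matrix.charmatrix_apply_eq, Matrix.one_apply_eq]
  · simp [Matrix.charmatrix_apply_ne _ _ _ h, Matrix.one_apply_ne h]

lemma keyCharpoly {k : ℕ} (X : Matrix (Fin (k + 1)) (Fin k) ℂ)
    (Y : Matrix (Fin k) (Fin (k + 1)) ℂ) :
    (X * Y).charpoly = Polynomial.X * (Y * X).charpoly := by
  apply Polynomial.eq_of_infinite_eval_eq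
  have hsub : {(0 : ℂ)}ᶜ ⊆ {x | Polynomial.eval x (X * Y).charpoly
      = Polynomial.eval x (Polynomial.X * (Y * X).charpoly)} := by
    intro μ hμ
    have hμ0 : μ ≠ 0 := hμ
    have hinv : μ * μ⁻¹ = 1 := mul_inv_cancel₀ hμ0
    simp only [Set.mem_setOf_eq, Polynomial.eval_mul, Polynomial.eval_X]
    rw [myEvalCharpoly, myEvalCharpoly]
    have e1 : μ • (1 : Matrix (Fin (k + 1)) (Fin (k + 1)) ℂ) - X * Y
        = μ • ((1 : Matrix (Fin (k + 1)) (Fin (k + 1)) ℂ) - (μ⁻¹ • X) * Y) := by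
      rw [smul_sub, Matrix.smul_mul, smul_smul, hinv, one_smul]
    have e2 : μ • (1 : Matrix (Fin k) (Fin k) ℂ) - Y * X
        = μ • ((1 : Matrix (Fin k) (Fin k) ℂ) - Y * (μ⁻¹ • X)) := by
      rw [smul_sub, Matrix.mul_smul, smul_smul, hinv, one_smul]
    rw [e1, e2, Matrix.det_smul, Matrix.det_smul, Matrix.det_one_sub_mul_comm]
    simp only [Fintype.card_fin]
    ring
  exact (Set.finite_singleton (0 : ℂ)).infinite_compl.mono hsub

theorem stmt3 (M : ℕ) (hM : 2 ≤ M) (A : Matrix (Fin M) (Fin M) ℝ)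
    (hA : eVec M ᵥ* A = 0)
    (h0 : (A.charpoly.map (algebraMap ℝ ℂ)).rootMultiplicity 0 = 1)
    (hneg : ∀ μ : ℂ, μ ≠ 0 → (A.charpoly.map (algebraMap ℝ ℂ)).IsRoot μ → μ.re < 0) :
    ∀ μ : ℂ, ((J M * A * H M).charpoly.map (algebraMap ℝ ℂ)).IsRoot μ → μ.re < 0 := by
  obtain ⟨n, rfl⟩ : ∃ n, M = n + 1 := ⟨M - 1, by omega⟩
  -- Column sums of A are zero
  have hcol : ∀ j, ∑ k, A k j = 0 := by
    intro j
    have := congrFun hA j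
    simpa [Matrix.vecMul, dotProduct, eVec] using this
  -- J * A picks out the first n rows
  have hJA : ∀ (l : Fin n) (j : Fin (n + 1)), (_root_.J (n + 1) * A) l j = A l.castSucc j := by
    intro l j
    rw [Matrix.mul_apply]
    rw [Finset.sum_eq_single l.castSucc]
    · simp [_root_.J]
    · intro k _ hk
      have : (l : ℕ) ≠ (k : ℕ) := by
        intro h
        apply hk
        ext
        simp [← h]
      simp [_root_.J, this]
    · simp
  -- H * (J * A) = A
  have hHJA : _root_.H (n + 1) * (_root_.J (n + 1) * A) = A := by
    ext i j
    rw [Matrix.mul_apply]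
    simp only [hJA]
    induction i using Fin.lastCases with
    | last =>
      show ∑ l : Fin n, _root_.H (n + 1) (Fin.last n) l * A l.castSucc j = A (Fin.last n) j
      have hlast : ∀ l : Fin n, _root_.H (n + 1) (Fin.last n) l = -1 := by
        intro l
        have h1 : ¬ ((n : ℕ) = (l : ℕ)) := by
          have := l.isLt
          omega
        simp [_root_.H, Fin.val_last, h1]
      simp only [hlast, neg_one_mul, Finset.sum_neg_distrib]
      have := hcol j
      rw [Fin.sum_univ_castSucc] at this
      linarith
    | cast i =>
      show ∑ l : Fin n, _root_.H (n + 1) i.castSucc l * A l.castSucc j = A i.castSucc j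
      rw [Finset.sum_eq_single i]
      · have : ((i.castSucc : Fin (n + 1)) : ℕ) = (i : ℕ) := rfl
        simp [_root_.H, this]
      · intro l _ hl
        have h1 : (i : ℕ) ≠ (l : ℕ) := by
          intro h
          exact hl (by ext; exact h.symm)
        have h2 : (i : ℕ) ≠ n := by
          have := i.isLt
          omega
        simp [_root_.H, h1, h2]
      · simp
  -- pass to ℂ
  set f : ℝ →+* ℂ := (algebraMap ℝ ℂ)
  set Ac := A.map f
  set Jc := (_root_.J (n + 1)).map f
  set Hc := (_root_.H (n + 1)).map f
  have hmapA : Ac = Hc * (Jc * Ac) := by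
    conv_lhs => rw [show Ac = (_root_.H (n + 1) * (_root_.J (n + 1) * A)).map f by rw [hHJA]]
    rw [Matrix.map_mul, Matrix.map_mul]
  have hp : A.charpoly.map f = (Hc * (Jc * Ac)).charpoly := by
    rw [← hmapA, ← Matrix.charpoly_map]
  have hq : (_root_.J (n + 1) * A * _root_.H (n + 1)).charpoly.map f = ((Jc * Ac) * Hc).charpoly := by
    rw [← Matrix.charpoly_map, Matrix.map_mul, Matrix.map_mul]
  have hkey : A.charpoly.map f = Polynomial.X * ((_root_.J (n + 1) * A * _root_.H (n + 1)).charpoly.map f) := by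
    rw [hp, hq, keyCharpoly]
  set q := (_root_.J (n + 1) * A * _root_.H (n + 1)).charpoly.map f with hqdef
  have hqne : q ≠ 0 := by
    have : q.Monic := (Matrix.charpoly_monic _).map f
    exact this.ne_zero
  have hXq : (Polynomial.X * q : ℂ[X]) ≠ 0 := mul_ne_zero Polynomial.X_ne_zero hqne
  have hrm : (Polynomial.X * q).rootMultiplicity 0 =
      Polynomial.X.rootMultiplicity (0 : ℂ) + q.rootMultiplicity 0 :=
    Polynomial.rootMultiplicity_mul hXq
  have hrmX : (Polynomial.X : ℂ[X]).rootMultiplicity 0 = 1 := by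
    have := Polynomial.rootMultiplicity_X_sub_C (x := (0 : ℂ)) (y := (0 : ℂ))
    simpa using this
  have hq0 : q.rootMultiplicity 0 = 0 := by
    rw [hkey, hrm, hrmX] at h0
    omega
  have hnotroot : ¬ q.IsRoot 0 := by
    intro hr
    have := (Polynomial.rootMultiplicity_pos hqne).mpr hr
    omega
  intro μ hμ
  by_cases hμ0 : μ = 0
  · exact absurd (hμ0 ▸ hμ) hnotroot
  · apply hneg μ hμ0
    rw [Polynomial.IsRoot, hkey, Polynomial.eval_mul, Polynomial.eval_X, hμ, mul_zero]
end

section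
/- Let A be an M×M real matrix with eᵀA = 0 such that the (M−1)×(M−1) matrix J A H is invertible. Define p_∞ = (I_M − H (J A H)^{-1} J A) e_M ∈ ℝ^M. Then A p_∞ = 0 and eᵀ p_∞ = 1; that is, p_∞ is an explicit stationary solution of the master equation dp/dt = A p satisfying the probability normalization constraint. -/
open Matrix

/-- The unit vector `e_M = (0,...,0,1)ᵀ`. -/
noncomputable def eM (M : ℕ) : Fin M → ℝ := fun i => if (i : ℕ) = M - 1 then 1 else 0

lemma colsum_H (M : ℕ) : eVec M ᵥ* H M = 0 := by
  funext j
  have hj : (j : ℕ) < M - 1 := j.2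
  have hlt : M - 1 < M := by omega
  simp only [vecMul, dotProduct, eVec, H, Matrix.of_apply, one_mul, Pi.zero_apply]
  have key : ∀ x : Fin M, (if (x:ℕ) = (j:ℕ) then (1:ℝ) else if (x:ℕ) = M-1 then -1 else 0)
      = (if x = ⟨(j:ℕ), by omega⟩ then 1 else 0) + (if x = ⟨M-1, hlt⟩ then -1 else 0) := by
    intro x
    rcases eq_or_ne (x:ℕ) (j:ℕ) with h1 | h1 <;> rcases eq_or_ne (x:ℕ) (M-1) with h2 | h2 <;>
      (simp_all [Fin.ext_iff]) <;> omega
  rw [Finset.sum_congr rfl fun x _ => key x, Finset.sum_add_distrib]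
  simp [Finset.sum_ite_eq']

lemma e_dot_eM (M : ℕ) (hM : 2 ≤ M) : eVec M ⬝ᵥ eM M = 1 := by
  have hlt : M - 1 < M := by omega
  simp only [dotProduct, eVec, eM, one_mul]
  have key : ∀ x : Fin M, (if (x:ℕ) = M-1 then (1:ℝ) else 0)
      = (if x = ⟨M-1, hlt⟩ then 1 else 0) := by
    intro x; simp [Fin.ext_iff]
  rw [Finset.sum_congr rfl fun x _ => key x]
  simp

lemma HJ_eq (M : ℕ) (hM : 2 ≤ M) (w : Fin M → ℝ) (hw : eVec M ⬝ᵥ w = 0) :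
    H M *ᵥ (_root_.J M *ᵥ w) = w := by
  have hlt : M - 1 < M := by omega
  set v : Fin (M - 1) → ℝ := _root_.J M *ᵥ w with hvdef
  have hJ : ∀ k : Fin (M-1), v k = w ⟨(k:ℕ), by omega⟩ := by
    intro k
    show ∑ x : Fin M, _root_.J M k x * w x = _
    simp only [_root_.J, Matrix.of_apply, ite_mul, one_mul, zero_mul]
    have key : ∀ x : Fin M, (if (k:ℕ) = (x:ℕ) then w x else 0)
        = (if x = ⟨(k:ℕ), by omega⟩ then w x else 0) := by
      intro x; simp [Fin.ext_iff, eq_comm]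
    rw [Finset.sum_congr rfl fun x _ => key x, Finset.sum_ite_eq']
    simp
  funext i
  show ∑ k : Fin (M-1), H M i k * v k = w i
  simp only [H, Matrix.of_apply, ite_mul, one_mul, neg_one_mul, zero_mul]
  rcases lt_or_ge (i:ℕ) (M-1) with hi | hi
  · have key : ∀ k : Fin (M-1), (if (i:ℕ) = (k:ℕ) then v k
        else if (i:ℕ) = M - 1 then -(v k) else 0)
        = (if k = ⟨(i:ℕ), hi⟩ then v k else 0) := by
      intro k
      have h2 : (i:ℕ) ≠ M - 1 := by omega
      simp [Fin.ext_iff, eq_comm, h2]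
    rw [Finset.sum_congr rfl fun k _ => key k, Finset.sum_ite_eq']
    simp [hJ, Fin.ext_iff]
  · have hiM : (i:ℕ) = M - 1 := by omega
    have key : ∀ k : Fin (M-1), (if (i:ℕ) = (k:ℕ) then v k
        else if (i:ℕ) = M - 1 then -(v k) else 0)
        = -(w ⟨(k:ℕ), by omega⟩) := by
      intro k
      have h1 : (i:ℕ) ≠ (k:ℕ) := by have := k.2; omega
      have h2 : ¬(M - 1 = (k:ℕ)) := by have := k.2; omega
      simp [h1, hiM, h2, hJ]
    rw [Finset.sum_congr rfl fun k _ => key k]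
    have hsum : ∑ x : Fin M, w x = 0 := by simpa [dotProduct, eVec] using hw
    have hM1 : M - 1 + 1 = M := by omega
    have he : ∑ x : Fin (M-1+1), w (Fin.cast hM1 x) = ∑ x : Fin M, w x :=
      Fintype.sum_equiv (finCongr hM1) _ _ (fun x => rfl)
    have hsplit := Fin.sum_univ_castSucc (f := fun x : Fin (M-1+1) => w (Fin.cast hM1 x))
    have h3 : ∀ k : Fin (M-1), w (Fin.cast hM1 k.castSucc) = w ⟨(k:ℕ), by omega⟩ := by
      intro k; congr 1
    have h4 : w (Fin.cast hM1 (Fin.last (M-1))) = w i := by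
      congr 1; exact Fin.ext (by simp [hiM])
    rw [Finset.sum_neg_distrib]
    rw [Finset.sum_congr rfl fun k _ => (h3 k).symm]
    have : (∑ k : Fin (M-1), w (Fin.cast hM1 k.castSucc)) + w i = 0 := by
      rw [← h4, ← hsplit, he, hsum]
    linarith

theorem stmt5 (M : ℕ) (hM : 2 ≤ M) (A : Matrix (Fin M) (Fin M) ℝ)
    (hA : eVec M ᵥ* A = 0)
    (hinv : IsUnit (J M * A * H M)) :
    A *ᵥ ((1 - H M * (J M * A * H M)⁻¹ * (J M * A)) *ᵥ eM M) = 0 ∧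
    eVec M ⬝ᵥ ((1 - H M * (J M * A * H M)⁻¹ * (J M * A)) *ᵥ eM M) = 1 := by
  set B : Matrix (Fin (M-1)) (Fin (M-1)) ℝ := (J M * A * H M)⁻¹ with hB
  have hdet : IsUnit (J M * A * H M).det := (Matrix.isUnit_iff_isUnit_det _).mp hinv
  have hmul : (J M * A * H M) * B = 1 := Matrix.mul_nonsing_inv _ hdet
  set p : Fin M → ℝ := (1 - H M * B * (J M * A)) *ᵥ eM M with hp
  have hAP : J M * A * (1 - H M * B * (J M * A)) = 0 := by
    rw [Matrix.mul_sub, Matrix.mul_one]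
    have : J M * A * (H M * B * (J M * A)) = ((J M * A * H M) * B) * (J M * A) := by
      simp only [Matrix.mul_assoc]
    rw [this, hmul, Matrix.one_mul, sub_self]
  constructor
  · have h1 : eVec M ⬝ᵥ (A *ᵥ p) = 0 := by
      rw [Matrix.dotProduct_mulVec, hA, zero_dotProduct]
    have h2 : J M *ᵥ (A *ᵥ p) = 0 := by
      rw [hp, Matrix.mulVec_mulVec, Matrix.mulVec_mulVec, hAP, Matrix.zero_mulVec]
    rw [show A *ᵥ p = H M *ᵥ (J M *ᵥ (A *ᵥ p)) from (HJ_eq M hM _ h1).symm, h2,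
      Matrix.mulVec_zero]
  · rw [hp, Matrix.sub_mulVec, Matrix.one_mulVec, dotProduct_sub, e_dot_eM M hM]
    have : eVec M ⬝ᵥ ((H M * B * (J M * A)) *ᵥ eM M) = 0 := by
      rw [Matrix.dotProduct_mulVec]
      rw [show H M * B * (J M * A) = H M * (B * (J M * A)) from by rw [Matrix.mul_assoc]]
      rw [← Matrix.vecMul_vecMul, colsum_H, Matrix.zero_vecMul, zero_dotProduct]
    rw [this, sub_zero]
end

section
/- Let A be an M×M real matrix with eᵀA = 0 and let p : ℝ → ℝ^M be differentiable with p'(t) = A p(t) for all t and eᵀ p(0) = 1. Set b̃ = J A e_M, Ã = J A H, and p̃(t) = J p(t). Then p̃ satisfies the reduced affine differential equation p̃'(t) = b̃ + Ã p̃(t) for all t, and p(t) = e_M + H p̃(t) for all t. -/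
open Matrix

/-!
Since `eᵀ A = 0`, the quantity `eᵀ p(t)` has derivative `eᵀ A p(t) = 0`, so it stays equal to `1`.
`J` forgets the last coordinate and `H` restores it as minus the sum of the others, i.e.
`H J = I - e_M eᵀ`; hence `p = e_M + H J p` on the hyperplane `eᵀ p = 1`, and substituting this
into `(J p)' = J A p` gives the reduced affine equation.
-/

section Derivatives

variable {𝕜 : Type*} [NontriviallyNormedField 𝕜] [CompleteSpace 𝕜] {m n : Type*} [Fintype n]
  {p : 𝕜 → n → 𝕜} {p' : n → 𝕜} {t : 𝕜}

theorem HasDerivAt.matrix_mulVec [Fintype m] (B : Matrix m n 𝕜) (h : HasDerivAt p p' t) :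
    HasDerivAt (fun s => B *ᵥ p s) (B *ᵥ p') t :=
  (LinearMap.toContinuousLinearMap (mulVecLin B)).hasFDerivAt.comp_hasDerivAt t h

theorem HasDerivAt.const_dotProduct (w : n → 𝕜) (h : HasDerivAt p p' t) :
    HasDerivAt (fun s => w ⬝ᵥ p s) (w ⬝ᵥ p') t :=
  (LinearMap.toContinuousLinearMap (dotProductBilin 𝕜 𝕜 w)).hasFDerivAt.comp_hasDerivAt t h

end Derivatives

theorem dotProduct_eq_of_vecMul_eq_zero {𝕜 : Type*} [RCLike 𝕜] {n : Type*} [Fintype n]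
    {p : 𝕜 → n → 𝕜} {A : Matrix n n 𝕜} {w : n → 𝕜} (hA : w ᵥ* A = 0)
    (hp : ∀ t, HasDerivAt p (A *ᵥ p t) t) (t : 𝕜) : w ⬝ᵥ p t = w ⬝ᵥ p 0 := by
  have hw : ∀ s, HasDerivAt (fun s => w ⬝ᵥ p s) 0 s := fun s => by
    simpa only [dotProduct_mulVec, hA, zero_dotProduct] using (hp s).const_dotProduct w
  exact is_const_of_deriv_eq_zero (fun s => (hw s).differentiableAt) (fun s => (hw s).deriv) t 0

theorem H_mul_J (M : ℕ) : H M * J M = 1 - vecMulVec (eM M) (eVec M) := by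
  ext i k
  simp only [mul_apply, H, _root_.J, of_apply, Matrix.sub_apply, one_apply, vecMulVec_apply, eM,
    eVec, mul_one, Fin.ext_iff]
  by_cases hk : (k : ℕ) < M - 1
  · rw [Finset.sum_eq_single ⟨k, hk⟩ (fun j _ hj => by rw [if_neg (Fin.val_ne_of_ne hj), mul_zero])
      (by simp)]
    simp only [if_true, mul_one]
    split_ifs <;> first | omega | norm_num
  · have hkM : (k : ℕ) = M - 1 := by omega
    rw [Finset.sum_eq_zero fun j _ => by
      rw [if_neg (show (j : ℕ) ≠ k by have := j.isLt; omega), mul_zero], hkM, sub_self]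

theorem H_mulVec_J_mulVec (M : ℕ) (v : Fin M → ℝ) :
    H M *ᵥ (J M *ᵥ v) = v - (eVec M ⬝ᵥ v) • eM M := by
  rw [mulVec_mulVec, H_mul_J, sub_mulVec, one_mulVec, vecMulVec_mulVec, op_smul_eq_smul]

theorem eq_eM_add_H_mulVec_J_mulVec {M : ℕ} {v : Fin M → ℝ} (hv : eVec M ⬝ᵥ v = 1) :
    v = eM M + H M *ᵥ (J M *ᵥ v) := by
  rw [H_mulVec_J_mulVec, hv, one_smul, add_sub_cancel]

theorem stmt10_general (M : ℕ) (A : Matrix (Fin M) (Fin M) ℝ)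
    (hA : eVec M ᵥ* A = 0)
    (p : ℝ → Fin M → ℝ)
    (hderiv : ∀ t : ℝ, HasDerivAt p (A *ᵥ p t) t)
    (hnorm : eVec M ⬝ᵥ p 0 = 1) :
    (∀ t : ℝ, HasDerivAt (fun s => J M *ᵥ p s)
        ((J M * A) *ᵥ eM M + (J M * A * H M) *ᵥ (J M *ᵥ p t)) t) ∧
    (∀ t : ℝ, p t = eM M + H M *ᵥ (J M *ᵥ p t)) := by
  have hp : ∀ t, p t = eM M + H M *ᵥ (J M *ᵥ p t) := fun t =>
    eq_eM_add_H_mulVec_J_mulVec ((dotProduct_eq_of_vecMul_eq_zero hA hderiv t).trans hnorm)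
  refine ⟨fun t => ?_, hp⟩
  convert (hderiv t).matrix_mulVec (J M) using 1
  conv_rhs => rw [hp t]
  simp only [mulVec_add, mulVec_mulVec, Matrix.mul_assoc]

theorem stmt10 (M : ℕ) (hM : 2 ≤ M) (A : Matrix (Fin M) (Fin M) ℝ)
    (hA : eVec M ᵥ* A = 0)
    (p : ℝ → Fin M → ℝ)
    (hderiv : ∀ t : ℝ, HasDerivAt p (A *ᵥ p t) t)
    (hnorm : eVec M ⬝ᵥ p 0 = 1) :
    (∀ t : ℝ, HasDerivAt (fun s => J M *ᵥ p s)
        ((J M * A) *ᵥ eM M + (J M * A * H M) *ᵥ (J M *ᵥ p t)) t) ∧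
    (∀ t : ℝ, p t = eM M + H M *ᵥ (J M *ᵥ p t)) :=
  stmt10_general M A hA p hderiv hnorm
end
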